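/- arXiv:1603.09014 — 6 statements merged into one kernel-verified Lean document; each statement's English description precedes it below -/
import Mathlib

section
/- Let Z* be the maximum over a finite nonempty family of assortments S of Z(S) = (Σᵢ wᵢ(S) Rᵢ(S))/(v₀ + Σᵢ wᵢ(S)). Then Z* equals the minimum z such that v₀·z ≥ Σᵢ max_S wᵢ(S)(Rᵢ(S) − z), where the inner maximum for each nest i is over the i-th components of all feasible assortments. -/
theorem stmt2 (m : ℕ) (𝒮 : Fin m → Type) [∀ i, Fintype (𝒮 i)] [∀ i, Nonempty (𝒮 i)]
    (w R : ∀ i, 𝒮 i → ℝ) (v₀ : ℝ)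
    (hw : ∀ i s, 0 ≤ w i s) (hv₀ : 0 < v₀) (Zstar : ℝ)
    (hZstar : IsGreatest
      (Set.range fun S : (∀ i, 𝒮 i) =>
        (∑ i, w i (S i) * R i (S i)) / (v₀ + ∑ i, w i (S i))) Zstar) :
    IsLeast {z : ℝ | v₀ * z ≥
        ∑ i, Finset.univ.sup' Finset.univ_nonempty (fun s : 𝒮 i => w i s * (R i s - z))}
      Zstar := by
  obtain ⟨⟨S₀, hS₀⟩, hub⟩ := hZstar
  have hden : ∀ S : (∀ i, 𝒮 i), 0 < v₀ + ∑ i, w i (S i) := fun S =>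
    add_pos_of_pos_of_nonneg hv₀ (Finset.sum_nonneg fun i _ => hw i (S i))
  have key : ∀ S : (∀ i, 𝒮 i), ∑ i, w i (S i) * (R i (S i) - Zstar) ≤ v₀ * Zstar := by
    intro S
    have h := hub ⟨S, rfl⟩
    simp only at h
    have h2 : ∑ i, w i (S i) * R i (S i) ≤ Zstar * (v₀ + ∑ i, w i (S i)) :=
      (div_le_iff₀ (hden S)).mp h
    have h3 : ∑ i, w i (S i) * (R i (S i) - Zstar)
        = (∑ i, w i (S i) * R i (S i)) - Zstar * ∑ i, w i (S i) := by
      rw [Finset.mul_sum, ← Finset.sum_sub_distrib]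
      congr 1; ext i; ring
    rw [h3]; nlinarith [h2]
  constructor
  · -- membership
    choose s hs using fun i =>
      Finset.exists_mem_eq_sup' (Finset.univ_nonempty (α := 𝒮 i))
        (fun t : 𝒮 i => w i t * (R i t - Zstar))
    have : ∑ i, Finset.univ.sup' Finset.univ_nonempty
        (fun t : 𝒮 i => w i t * (R i t - Zstar))
        = ∑ i, w i (s i) * (R i (s i) - Zstar) := by
      apply Finset.sum_congr rfl
      intro i _
      exact (hs i).2
    show v₀ * Zstar ≥ _
    rw [this]
    exact key s
  · intro z hz
    simp only [Set.mem_setOf_eq] at hz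
    have hle : ∑ i, w i (S₀ i) * (R i (S₀ i) - z) ≤ v₀ * z := by
      refine le_trans (Finset.sum_le_sum fun i _ => ?_) hz
      exact Finset.le_sup' (fun t : 𝒮 i => w i t * (R i t - z)) (Finset.mem_univ (S₀ i))
    have h3 : ∑ i, w i (S₀ i) * (R i (S₀ i) - z)
        = (∑ i, w i (S₀ i) * R i (S₀ i)) - z * ∑ i, w i (S₀ i) := by
      rw [Finset.mul_sum, ← Finset.sum_sub_distrib]
      congr 1; ext i; ring
    rw [h3] at hle
    have : Zstar = (∑ i, w i (S₀ i) * R i (S₀ i)) / (v₀ + ∑ i, w i (S₀ i)) := hS₀.symm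
    rw [this, div_le_iff₀ (hden S₀)]
    nlinarith [hle]
end

section
/- (Optimality characterization) Let Z* be the maximal expected revenue over all feasible assortments. An assortment S = (S₁,…,Sₘ) is optimal (attains Z*) if and only if for every nest i, Sᵢ maximizes wᵢ(Sᵢ)(Rᵢ(Sᵢ) − Z*) over all feasible choices in nest i. -/
theorem stmt3 (m : ℕ) (𝒮 : Fin m → Type) [∀ i, Fintype (𝒮 i)] [∀ i, Nonempty (𝒮 i)]
    (w R : ∀ i, 𝒮 i → ℝ) (v₀ : ℝ)
    (hw : ∀ i s, 0 ≤ w i s) (hv₀ : 0 < v₀) (Zstar : ℝ)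
    (hZstar : IsGreatest
      (Set.range fun S : (∀ i, 𝒮 i) =>
        (∑ i, w i (S i) * R i (S i)) / (v₀ + ∑ i, w i (S i))) Zstar)
    (S : ∀ i, 𝒮 i) :
    (∑ i, w i (S i) * R i (S i)) / (v₀ + ∑ i, w i (S i)) = Zstar ↔
      ∀ i, ∀ t : 𝒮 i, w i t * (R i t - Zstar) ≤ w i (S i) * (R i (S i) - Zstar) := by
  set f : ∀ i, 𝒮 i → ℝ := fun i t => w i t * (R i t - Zstar) with hf
  have hD : ∀ T : ∀ i, 𝒮 i, 0 < v₀ + ∑ i, w i (T i) := fun T =>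
    add_pos_of_pos_of_nonneg hv₀ (Finset.sum_nonneg fun i _ => hw i (T i))
  have hsum : ∀ T : ∀ i, 𝒮 i,
      ∑ i, f i (T i) = (∑ i, w i (T i) * R i (T i)) - Zstar * ∑ i, w i (T i) := by
    intro T
    rw [Finset.mul_sum, ← Finset.sum_sub_distrib]
    congr 1; ext i; simp [hf]; ring
  -- upper bound
  have hub : ∀ T : ∀ i, 𝒮 i, ∑ i, f i (T i) ≤ Zstar * v₀ := by
    intro T
    have h := hZstar.2 (Set.mem_range_self T)
    rw [div_le_iff₀ (hD T)] at h
    rw [hsum T]; nlinarith [h]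
  -- argmax in each nest
  have hmax : ∀ i, ∃ t : 𝒮 i, ∀ t', f i t' ≤ f i t := fun i => Finite.exists_max (f i)
  choose Sm hSm using hmax
  -- attained value
  obtain ⟨S₀, hS₀⟩ := hZstar.1
  have hS₀' : ∑ i, f i (S₀ i) = Zstar * v₀ := by
    rw [div_eq_iff (ne_of_gt (hD S₀))] at hS₀
    rw [hsum S₀]; nlinarith [hS₀]
  have hSm' : ∑ i, f i (Sm i) = Zstar * v₀ := by
    refine le_antisymm (hub Sm) ?_
    rw [← hS₀']
    exact Finset.sum_le_sum fun i _ => hSm i (S₀ i)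
  -- key iff
  have key : ((∑ i, w i (S i) * R i (S i)) / (v₀ + ∑ i, w i (S i)) = Zstar) ↔
      ∑ i, f i (S i) = Zstar * v₀ := by
    rw [div_eq_iff (ne_of_gt (hD S)), hsum S]
    constructor <;> intro h <;> nlinarith [h]
  rw [key, ← hSm']
  rw [Finset.sum_eq_sum_iff_of_le (fun i _ => hSm i (S i))]
  constructor
  · intro h i t
    have := h i (Finset.mem_univ i)
    calc f i t ≤ f i (Sm i) := hSm i t
    _ = f i (S i) := this.symm
  · intro h i _
    exact le_antisymm (hSm i (S i)) (h i (Sm i))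
end

section
/- If an assortment S satisfies Σᵢ wᵢ(Sᵢ)(Rᵢ(Sᵢ) − Z*) ≥ Σᵢ wᵢ(Sᵢ*)(Rᵢ(Sᵢ*) − Z*) for an optimal assortment S*, then S is also optimal, i.e., Z(S) = Z*. -/
theorem stmt4 (m : ℕ) (𝒮 : Fin m → Type) [∀ i, Fintype (𝒮 i)] [∀ i, Nonempty (𝒮 i)]
    (w R : ∀ i, 𝒮 i → ℝ) (v₀ : ℝ)
    (hw : ∀ i s, 0 ≤ w i s) (hv₀ : 0 < v₀) (Zstar : ℝ)
    (hZstar : IsGreatest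
      (Set.range fun S : (∀ i, 𝒮 i) =>
        (∑ i, w i (S i) * R i (S i)) / (v₀ + ∑ i, w i (S i))) Zstar)
    (Sstar : ∀ i, 𝒮 i)
    (hSstar : (∑ i, w i (Sstar i) * R i (Sstar i)) / (v₀ + ∑ i, w i (Sstar i)) = Zstar)
    (S : ∀ i, 𝒮 i)
    (hS : ∑ i, w i (Sstar i) * (R i (Sstar i) - Zstar) ≤
          ∑ i, w i (S i) * (R i (S i) - Zstar)) :
    (∑ i, w i (S i) * R i (S i)) / (v₀ + ∑ i, w i (S i)) = Zstar := by
  have hDpos : 0 < v₀ + ∑ i, w i (S i) :=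
    lt_of_lt_of_le hv₀ (le_add_of_nonneg_right (Finset.sum_nonneg fun i _ => hw i (S i)))
  have hDspos : 0 < v₀ + ∑ i, w i (Sstar i) :=
    lt_of_lt_of_le hv₀ (le_add_of_nonneg_right (Finset.sum_nonneg fun i _ => hw i (Sstar i)))
  have hstar : ∑ i, w i (Sstar i) * R i (Sstar i) = Zstar * (v₀ + ∑ i, w i (Sstar i)) :=
    (div_eq_iff (ne_of_gt hDspos)).mp hSstar
  have hexp : ∀ (T : ∀ i, 𝒮 i), ∑ i, w i (T i) * (R i (T i) - Zstar)
      = (∑ i, w i (T i) * R i (T i)) - Zstar * ∑ i, w i (T i) := by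
    intro T
    rw [Finset.mul_sum]
    rw [← Finset.sum_sub_distrib]
    congr 1; ext i; ring
  have hle : (∑ i, w i (S i) * R i (S i)) / (v₀ + ∑ i, w i (S i)) ≤ Zstar :=
    hZstar.2 ⟨S, rfl⟩
  have hge : Zstar ≤ (∑ i, w i (S i) * R i (S i)) / (v₀ + ∑ i, w i (S i)) := by
    rw [le_div_iff₀ hDpos]
    have h1 : v₀ * Zstar ≤ ∑ i, w i (S i) * (R i (S i) - Zstar) := by
      calc v₀ * Zstar = ∑ i, w i (Sstar i) * (R i (Sstar i) - Zstar) := by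
            rw [hexp, hstar]; ring
        _ ≤ _ := hS
    rw [hexp] at h1
    nlinarith
  linarith
end

section
/- The unique root z of G(z) = 0 equals the maximal expected revenue Z* = max over assortments (S₁,…,Sₘ) with Sᵢ ∈ 𝒯ᵢ of (Σᵢ wᵢ(Sᵢ)Rᵢ(Sᵢ))/(v₀ + Σᵢ wᵢ(Sᵢ)). -/
theorem stmt8 (m : ℕ) (𝒯 : Fin m → Type) [∀ i, Fintype (𝒯 i)] [∀ i, Nonempty (𝒯 i)]
    (w R : ∀ i, 𝒯 i → ℝ) (v₀ : ℝ)
    (hw : ∀ i s, 0 ≤ w i s) (hv₀ : 0 < v₀)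
    (G : ℝ → ℝ)
    (hG : ∀ z, G z = -v₀ * z +
      ∑ i, Finset.univ.sup' Finset.univ_nonempty (fun s : 𝒯 i => w i s * (R i s - z)))
    (z Zstar : ℝ) (hz : G z = 0)
    (hZstar : IsGreatest
      (Set.range fun S : (∀ i, 𝒯 i) =>
        (∑ i, w i (S i) * R i (S i)) / (v₀ + ∑ i, w i (S i))) Zstar) :
    z = Zstar := by
  have hpos : ∀ S : (∀ i, 𝒯 i), 0 < v₀ + ∑ i, w i (S i) := by
    intro S
    have : (0:ℝ) ≤ ∑ i, w i (S i) := Finset.sum_nonneg fun i _ => hw i _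
    linarith
  obtain ⟨hmem, hub⟩ := hZstar
  obtain ⟨S₀, hS₀⟩ := hmem
  have hsum0 : ∑ i, w i (S₀ i) * R i (S₀ i) = Zstar * (v₀ + ∑ i, w i (S₀ i)) := by
    rw [← hS₀, div_mul_cancel₀ _ (ne_of_gt (hpos S₀))]
  -- expand ∑ w(S)(R(S)-Z)
  have hexpand : ∀ (S : ∀ i, 𝒯 i) (c : ℝ),
      ∑ i, w i (S i) * (R i (S i) - c)
        = (∑ i, w i (S i) * R i (S i)) - c * ∑ i, w i (S i) := by
    intro S c
    rw [Finset.mul_sum, ← Finset.sum_sub_distrib]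
    congr 1; ext i; ring
  have hGZ_ge : 0 ≤ G Zstar := by
    rw [hG]
    have h2 : ∑ i, w i (S₀ i) * (R i (S₀ i) - Zstar) ≤
        ∑ i, Finset.univ.sup' Finset.univ_nonempty (fun s : 𝒯 i => w i s * (R i s - Zstar)) :=
      Finset.sum_le_sum fun i _ => Finset.le_sup' (fun s : 𝒯 i => w i s * (R i s - Zstar)) (Finset.mem_univ _)
    rw [hexpand] at h2
    nlinarith [hsum0]
  have hGZ_le : G Zstar ≤ 0 := by
    have hex : ∀ i, ∃ s : 𝒯 i,
        Finset.univ.sup' Finset.univ_nonempty (fun s : 𝒯 i => w i s * (R i s - Zstar))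
          = w i s * (R i s - Zstar) := by
      intro i
      obtain ⟨b, _, hb⟩ := Finset.exists_mem_eq_sup' (Finset.univ_nonempty)
        (fun s : 𝒯 i => w i s * (R i s - Zstar))
      exact ⟨b, hb⟩
    choose S₁ hS₁ using hex
    have h3 : (∑ i, w i (S₁ i) * R i (S₁ i)) / (v₀ + ∑ i, w i (S₁ i)) ≤ Zstar :=
      hub ⟨S₁, rfl⟩
    have h4 : ∑ i, w i (S₁ i) * R i (S₁ i) ≤ Zstar * (v₀ + ∑ i, w i (S₁ i)) := by
      rw [div_le_iff₀ (hpos S₁)] at h3; linarith [h3]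
    rw [hG]
    have h5 : ∑ i, Finset.univ.sup' Finset.univ_nonempty
        (fun s : 𝒯 i => w i s * (R i s - Zstar)) = ∑ i, w i (S₁ i) * (R i (S₁ i) - Zstar) :=
      Finset.sum_congr rfl fun i _ => hS₁ i
    rw [h5, hexpand]
    nlinarith [h4]
  have hGZ : G Zstar = 0 := le_antisymm hGZ_le hGZ_ge
  have hanti : StrictAnti G := by
    intro a b hab
    rw [hG, hG]
    have hsum : ∀ i, Finset.univ.sup' Finset.univ_nonempty (fun s : 𝒯 i => w i s * (R i s - b))
        ≤ Finset.univ.sup' Finset.univ_nonempty (fun s : 𝒯 i => w i s * (R i s - a)) := by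
      intro i
      apply Finset.sup'_le
      intro s _
      have hws := hw i s
      have hle : w i s * (R i s - b) ≤ w i s * (R i s - a) := by nlinarith
      exact hle.trans (Finset.le_sup' (fun s : 𝒯 i => w i s * (R i s - a)) (Finset.mem_univ s))
    have hsum' := Finset.sum_le_sum fun i (_ : i ∈ Finset.univ) => hsum i
    nlinarith
  exact hanti.injective (hz.trans hGZ.symm)
end

section
/- If Z* is the unique root of G and for each i we pick Sᵢ* ∈ argmax_{Sᵢ ∈ 𝒯ᵢ} wᵢ(Sᵢ)(Rᵢ(Sᵢ) − Z*), then the assortment (S₁*,…,Sₘ*) achieves expected revenue exactly Z*, i.e., is optimal. -/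
theorem stmt9 (m : ℕ) (𝒯 : Fin m → Type) [∀ i, Fintype (𝒯 i)] [∀ i, Nonempty (𝒯 i)]
    (w R : ∀ i, 𝒯 i → ℝ) (v₀ : ℝ)
    (hw : ∀ i s, 0 ≤ w i s) (hv₀ : 0 < v₀)
    (G : ℝ → ℝ)
    (hG : ∀ z, G z = -v₀ * z +
      ∑ i, Finset.univ.sup' Finset.univ_nonempty (fun s : 𝒯 i => w i s * (R i s - z)))
    (Zstar : ℝ) (hroot : G Zstar = 0)
    (Sstar : ∀ i, 𝒯 i)
    (hmax : ∀ i, ∀ t : 𝒯 i,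
      w i t * (R i t - Zstar) ≤ w i (Sstar i) * (R i (Sstar i) - Zstar)) :
    (∑ i, w i (Sstar i) * R i (Sstar i)) / (v₀ + ∑ i, w i (Sstar i)) = Zstar := by
  have hsup : ∀ i, Finset.univ.sup' Finset.univ_nonempty
      (fun s : 𝒯 i => w i s * (R i s - Zstar)) = w i (Sstar i) * (R i (Sstar i) - Zstar) := by
    intro i
    apply le_antisymm
    · exact Finset.sup'_le _ _ fun t _ => hmax i t
    · exact Finset.le_sup' (fun s : 𝒯 i => w i s * (R i s - Zstar)) (Finset.mem_univ (Sstar i))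
  have h0 := hroot
  rw [hG] at h0
  simp only [hsup] at h0
  have hsum : ∑ i, w i (Sstar i) * (R i (Sstar i) - Zstar) = v₀ * Zstar := by linarith
  have hpos : 0 < v₀ + ∑ i, w i (Sstar i) := by
    have : 0 ≤ ∑ i, w i (Sstar i) := Finset.sum_nonneg fun i _ => hw i _
    linarith
  rw [div_eq_iff hpos.ne']
  have : ∑ i, w i (Sstar i) * (R i (Sstar i) - Zstar)
      = ∑ i, w i (Sstar i) * R i (Sstar i) - (∑ i, w i (Sstar i)) * Zstar := by
    simp [mul_sub, Finset.sum_sub_distrib, Finset.sum_mul]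
  rw [this] at hsum
  ring_nf
  ring_nf at hsum
  linarith
end

section
/- Under the nested logit model, the maximal expected revenue Z* satisfies Z* = max over all z ∈ ℝ of the ratio A(z)/B(z), where A(z) = Σᵢ wᵢ(Sᵢ(z))Rᵢ(Sᵢ(z)), B(z) = v₀ + Σᵢ wᵢ(Sᵢ(z)), and Sᵢ(z) is a maximizer of wᵢ(Sᵢ)(Rᵢ(Sᵢ) − z) over 𝒯ᵢ. In particular the maximum is attained at z = Z*. -/
theorem stmt17 (m : ℕ) (𝒯 : Fin m → Type) [∀ i, Fintype (𝒯 i)] [∀ i, Nonempty (𝒯 i)]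
    (w R : ∀ i, 𝒯 i → ℝ) (v₀ : ℝ)
    (hw : ∀ i s, 0 ≤ w i s) (hv₀ : 0 < v₀)
    (Zstar : ℝ)
    (hZstar : IsGreatest
      (Set.range fun S : (∀ i, 𝒯 i) =>
        (∑ i, w i (S i) * R i (S i)) / (v₀ + ∑ i, w i (S i))) Zstar)
    (Sel : ℝ → ∀ i, 𝒯 i)
    (hSel : ∀ (z : ℝ) (i : Fin m) (t : 𝒯 i),
      w i t * (R i t - z) ≤ w i (Sel z i) * (R i (Sel z i) - z))
    (A B : ℝ → ℝ)
    (hA : ∀ z, A z = ∑ i, w i (Sel z i) * R i (Sel z i))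
    (hB : ∀ z, B z = v₀ + ∑ i, w i (Sel z i)) :
    IsGreatest (Set.range fun z : ℝ => A z / B z) Zstar ∧
    A Zstar / B Zstar = Zstar := by
  have hBpos : ∀ z, 0 < B z := by
    intro z
    rw [hB]
    have : 0 ≤ ∑ i, w i (Sel z i) := Finset.sum_nonneg fun i _ => hw i _
    linarith
  have hub : ∀ z, A z / B z ≤ Zstar := by
    intro z
    rw [hA, hB]
    exact hZstar.2 (Set.mem_range_self (Sel z))
  obtain ⟨S, hS⟩ := hZstar.1
  have hDpos : 0 < v₀ + ∑ i, w i (S i) := by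
    have : 0 ≤ ∑ i, w i (S i) := Finset.sum_nonneg fun i _ => hw i _
    linarith
  have hN : ∑ i, w i (S i) * R i (S i) = Zstar * (v₀ + ∑ i, w i (S i)) :=
    (div_eq_iff hDpos.ne').mp hS
  have hsum : ∑ i, w i (S i) * (R i (S i) - Zstar)
        ≤ ∑ i, w i (Sel Zstar i) * (R i (Sel Zstar i) - Zstar) :=
    Finset.sum_le_sum fun i _ => hSel Zstar i (S i)
  have hexp : ∀ (T : ∀ i, 𝒯 i), ∑ i, w i (T i) * (R i (T i) - Zstar)
      = (∑ i, w i (T i) * R i (T i)) - Zstar * ∑ i, w i (T i) := by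
    intro T
    rw [Finset.mul_sum, ← Finset.sum_sub_distrib]
    exact Finset.sum_congr rfl fun i _ => by ring
  have key : Zstar * B Zstar ≤ A Zstar := by
    rw [hA, hB]
    rw [hexp S, hexp (Sel Zstar)] at hsum
    nlinarith [hsum, hN]
  have hge : Zstar ≤ A Zstar / B Zstar := (le_div_iff₀ (hBpos Zstar)).mpr key
  have heq : A Zstar / B Zstar = Zstar := le_antisymm (hub Zstar) hge
  exact ⟨⟨⟨Zstar, heq⟩, fun y ⟨z, hz⟩ => hz ▸ hub z⟩, heq⟩
end
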